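/- Sensitivity bound for the outcome-bridge identification formula under coarsening of the unmeasured confounder (Supplement S3, outcome-bridge bound): Let φ : 𝒰 → 𝒰_b, U_b := φ(U), let Y₀ be a nonnegative real random variable taking finitely many values, let h : 𝒲 × 𝒳 → [0, ∞), and let Γ ≥ 1. Assume: (i) (Y₀, W) ⫫ (Z, R) | (U, X); (ii) support equality: for all (u, z, x), P(U = u, Z = z, X = x, R = 0) > 0 if and only if P(U = u, Z = z, X = x, R = 1) > 0; (iii) for every (u, z, x) with P(U = u, Z = z, X = x, R = 0) > 0, 1/Γ ≤ r(u, z, x) ≤ Γ, where r(u, z, x) := P(U = u | U_b = φ(u), Z = z, X = x, R = 0)/P(U = u | U_b = φ(u), Z = z, X = x, R = 1); (iv) the coarsened-level bridge equation: E[ Y₀ | U_b = u_b, Z = z, X = x, R = 1 ] = E[ h(W, X) | U_b = u_b, Z = z, X = x, R = 1 ] for every (u_b, z, x) with P(U_b = u_b, Z = z, X = x, R = 1) > 0; (v) P(R = 0) > 0. Then (1/Γ²)·E[ h(W, X) | R = 0 ] ≤ E[ Y₀ | R = 0 ] ≤ Γ²·E[ h(W, X) | R = 0 ]. -/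

import Mathlib

open Finset

noncomputable section

open scoped Classical

variable {Ω : Type*} [Fintype Ω]

/-- Probability of an event `A` under the weight function `p`. -/
def pr (p : Ω → ℝ) (A : Ω → Prop) : ℝ := ∑ ω, if A ω then p ω else 0

/-- Expectation of a real random variable `Y` under the weight function `p`. -/
def ex (p : Ω → ℝ) (Y : Ω → ℝ) : ℝ := ∑ ω, p ω * Y ω

/-- Conditional probability `P(A | B)`. -/
def cpr (p : Ω → ℝ) (A B : Ω → Prop) : ℝ := pr p (fun ω => A ω ∧ B ω) / pr p B

/-- Conditional expectation `E[Y | B]`. -/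
def cex (p : Ω → ℝ) (Y : Ω → ℝ) (B : Ω → Prop) : ℝ :=
  (∑ ω, if B ω then p ω * Y ω else 0) / pr p B

/-! ### Auxiliary lemmas -/

/-- Unnormalized conditional mass `E[Y ; B]`. -/
def NUM (p : Ω → ℝ) (Y : Ω → ℝ) (B : Ω → Prop) : ℝ := ∑ ω, if B ω then p ω * Y ω else 0

lemma cex_eq (p : Ω → ℝ) (Y : Ω → ℝ) (B : Ω → Prop) :
    cex p Y B = NUM p Y B / pr p B := rfl

lemma pr_nonneg {p : Ω → ℝ} (hp : ∀ ω, 0 ≤ p ω) (B : Ω → Prop) : 0 ≤ pr p B :=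
  Finset.sum_nonneg fun ω _ => by split <;> simp [hp ω]

lemma pr_mono {p : Ω → ℝ} (hp : ∀ ω, 0 ≤ p ω) {B B' : Ω → Prop}
    (hB : ∀ ω, B ω → B' ω) : pr p B ≤ pr p B' := by
  refine Finset.sum_le_sum fun ω _ => ?_
  by_cases hb : B ω
  · simp [hb, hB ω hb]
  · simp only [hb, if_false]
    split <;> simp [hp ω]

lemma pr_congr {p : Ω → ℝ} {B B' : Ω → Prop} (hB : ∀ ω, B ω ↔ B' ω) : pr p B = pr p B' := by
  unfold pr; exact Finset.sum_congr rfl fun ω _ => by rw [iff_iff_eq.mp (hB ω)]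

lemma pr_zero_imp {p : Ω → ℝ} (hp : ∀ ω, 0 ≤ p ω) {B : Ω → Prop} (h : pr p B = 0)
    {ω : Ω} (hω : B ω) : p ω = 0 := by
  have := (Finset.sum_eq_zero_iff_of_nonneg (fun ω _ => by split <;> simp [hp ω])).mp h ω
    (Finset.mem_univ ω)
  simpa [hω] using this

lemma sum_split {ι : Type*} [Fintype ι] (f : Ω → ℝ) (V : Ω → ι) (B : Ω → Prop)
    [∀ ω, Decidable (B ω)] [∀ ω i, Decidable (V ω = i ∧ B ω)] :
    (∑ ω, if B ω then f ω else 0) = ∑ i, ∑ ω, if V ω = i ∧ B ω then f ω else 0 := by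
  rw [Finset.sum_comm]
  refine Finset.sum_congr rfl fun ω _ => ?_
  by_cases hB : B ω <;> simp [hB]

lemma NUM_nonneg {p : Ω → ℝ} (hp : ∀ ω, 0 ≤ p ω) {Y : Ω → ℝ} (hY : ∀ ω, 0 ≤ Y ω)
    (B : Ω → Prop) : 0 ≤ NUM p Y B :=
  Finset.sum_nonneg fun ω _ => by
    split
    · exact mul_nonneg (hp ω) (hY ω)
    · exact le_refl 0

lemma NUM_congr {p : Ω → ℝ} {Y Y' : Ω → ℝ} {B B' : Ω → Prop}
    (hBB : ∀ ω, B ω ↔ B' ω) (hY : ∀ ω, B ω → Y ω = Y' ω) :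
    NUM p Y B = NUM p Y' B' := by
  refine Finset.sum_congr rfl fun ω _ => ?_
  by_cases hb : B ω
  · rw [if_pos hb, if_pos ((hBB ω).mp hb), hY ω hb]
  · rw [if_neg hb, if_neg (fun hb' => hb ((hBB ω).mpr hb'))]

lemma NUM_zero {p : Ω → ℝ} (hp : ∀ ω, 0 ≤ p ω) {B : Ω → Prop}
    (h : pr p B = 0) (Y : Ω → ℝ) : NUM p Y B = 0 := by
  refine Finset.sum_eq_zero fun ω _ => ?_
  by_cases hb : B ω
  · simp [hb, pr_zero_imp hp h hb]
  · simp [hb]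

lemma NUM_split {ι : Type*} [Fintype ι] (p : Ω → ℝ) (Y : Ω → ℝ) (V : Ω → ι) (B : Ω → Prop) :
    NUM p Y B = ∑ i, NUM p Y (fun ω => V ω = i ∧ B ω) := by
  unfold NUM
  exact @sum_split _ _ _ _ _ V B (fun ω => Classical.propDecidable _)
    (fun ω i => Classical.propDecidable _)

lemma pr_split {ι : Type*} [Fintype ι] (p : Ω → ℝ) (V : Ω → ι) (B : Ω → Prop) :
    pr p B = ∑ i, pr p (fun ω => V ω = i ∧ B ω) := by
  unfold pr
  exact @sum_split _ _ _ _ _ V B (fun ω => Classical.propDecidable _)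
    (fun ω i => Classical.propDecidable _)

lemma NUM_fiber {𝒲 : Type*} [Fintype 𝒲] (p : Ω → ℝ) (Y0 : Ω → ℝ) (W : Ω → 𝒲)
    (g : ℝ → 𝒲 → ℝ) (B : Ω → Prop) :
    NUM p (fun ω => g (Y0 ω) (W ω)) B
      = ∑ y ∈ Finset.univ.image Y0, ∑ w,
          g y w * pr p (fun ω => Y0 ω = y ∧ W ω = w ∧ B ω) := by
  unfold NUM
  calc (∑ ω, if B ω then p ω * g (Y0 ω) (W ω) else 0)
      = ∑ ω, ∑ y ∈ Finset.univ.image Y0, ∑ w,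
          (if Y0 ω = y ∧ W ω = w ∧ B ω then g y w * p ω else 0) := by
        refine Finset.sum_congr rfl fun ω _ => ?_
        by_cases hB : B ω
        · rw [if_pos hB, Finset.sum_eq_single (Y0 ω)]
          · rw [Finset.sum_eq_single (W ω)]
            · simp [hB, mul_comm]
            · intro w _ hw; rw [if_neg (by tauto)]
            · simp
          · intro y _ hy; exact Finset.sum_eq_zero fun w _ => by rw [if_neg (by tauto)]
          · intro hy; exact absurd (Finset.mem_image_of_mem Y0 (Finset.mem_univ ω)) hy
        · rw [if_neg hB]
          exact (Finset.sum_eq_zero fun y _ => Finset.sum_eq_zero fun w _ =>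
            by rw [if_neg (by tauto)]).symm
    _ = ∑ y ∈ Finset.univ.image Y0, ∑ ω, ∑ w,
          (if Y0 ω = y ∧ W ω = w ∧ B ω then g y w * p ω else 0) := Finset.sum_comm
    _ = ∑ y ∈ Finset.univ.image Y0, ∑ w, ∑ ω,
          (if Y0 ω = y ∧ W ω = w ∧ B ω then g y w * p ω else 0) :=
        Finset.sum_congr rfl fun y _ => Finset.sum_comm
    _ = _ := by
        refine Finset.sum_congr rfl fun y _ => Finset.sum_congr rfl fun w _ => ?_
        rw [pr, Finset.mul_sum]
        exact Finset.sum_congr rfl fun ω _ => by split <;> simp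

lemma nc_cell {𝒳 𝒰 𝒵 𝒲 : Type*} [Fintype 𝒳] [Fintype 𝒰] [Fintype 𝒵] [Fintype 𝒲]
    (p : Ω → ℝ) (R : Ω → Bool) (X : Ω → 𝒳) (U : Ω → 𝒰) (Z : Ω → 𝒵) (W : Ω → 𝒲)
    (Y0 : Ω → ℝ) (g : ℝ → 𝒲 → ℝ) (u : 𝒰) (z : 𝒵) (x : 𝒳) (r : Bool)
    (hUX : 0 < pr p (fun ω => U ω = u ∧ X ω = x))
    (hNC : ∀ (y : ℝ) (w : 𝒲),
      cpr p (fun ω => (Y0 ω = y ∧ W ω = w) ∧ (Z ω = z ∧ R ω = r))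
          (fun ω => U ω = u ∧ X ω = x)
        = cpr p (fun ω => Y0 ω = y ∧ W ω = w) (fun ω => U ω = u ∧ X ω = x)
          * cpr p (fun ω => Z ω = z ∧ R ω = r) (fun ω => U ω = u ∧ X ω = x)) :
    NUM p (fun ω => g (Y0 ω) (W ω)) (fun ω => U ω = u ∧ Z ω = z ∧ X ω = x ∧ R ω = r)
        * pr p (fun ω => U ω = u ∧ X ω = x)
      = NUM p (fun ω => g (Y0 ω) (W ω)) (fun ω => U ω = u ∧ X ω = x)
        * pr p (fun ω => U ω = u ∧ Z ω = z ∧ X ω = x ∧ R ω = r) := by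
  have key : ∀ (y : ℝ) (w : 𝒲),
      pr p (fun ω => Y0 ω = y ∧ W ω = w ∧ U ω = u ∧ Z ω = z ∧ X ω = x ∧ R ω = r)
          * pr p (fun ω => U ω = u ∧ X ω = x)
        = pr p (fun ω => Y0 ω = y ∧ W ω = w ∧ U ω = u ∧ X ω = x)
          * pr p (fun ω => U ω = u ∧ Z ω = z ∧ X ω = x ∧ R ω = r) := by
    intro y w
    have h1 := hNC y w
    unfold cpr at h1
    rw [pr_congr (B := fun ω => ((Y0 ω = y ∧ W ω = w) ∧ (Z ω = z ∧ R ω = r)) ∧ U ω = u ∧ X ω = x)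
      (B' := fun ω => Y0 ω = y ∧ W ω = w ∧ U ω = u ∧ Z ω = z ∧ X ω = x ∧ R ω = r)
      (fun ω => by tauto)] at h1
    rw [pr_congr (B := fun ω => (Y0 ω = y ∧ W ω = w) ∧ U ω = u ∧ X ω = x)
      (B' := fun ω => Y0 ω = y ∧ W ω = w ∧ U ω = u ∧ X ω = x) (fun ω => by tauto)] at h1
    rw [pr_congr (B := fun ω => (Z ω = z ∧ R ω = r) ∧ U ω = u ∧ X ω = x)
      (B' := fun ω => U ω = u ∧ Z ω = z ∧ X ω = x ∧ R ω = r) (fun ω => by tauto)] at h1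
    field_simp at h1
    refine mul_right_cancel₀ (ne_of_gt hUX) ?_
    linear_combination (pr p (fun ω => U ω = u ∧ X ω = x)) * h1
  rw [NUM_fiber p Y0 W g (fun ω => U ω = u ∧ Z ω = z ∧ X ω = x ∧ R ω = r),
    NUM_fiber p Y0 W g (fun ω => U ω = u ∧ X ω = x), Finset.sum_mul, Finset.sum_mul]
  refine Finset.sum_congr rfl fun y _ => ?_
  rw [Finset.sum_mul, Finset.sum_mul]
  refine Finset.sum_congr rfl fun w _ => ?_
  rw [mul_assoc, mul_assoc]
  congr 1
  have := key y w
  rw [pr_congr (B := fun ω => Y0 ω = y ∧ W ω = w ∧ U ω = u ∧ Z ω = z ∧ X ω = x ∧ R ω = r)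
    (B' := fun ω => Y0 ω = y ∧ W ω = w ∧ (U ω = u ∧ Z ω = z ∧ X ω = x ∧ R ω = r))
    (fun ω => by tauto)] at this
  rw [pr_congr (B := fun ω => Y0 ω = y ∧ W ω = w ∧ U ω = u ∧ X ω = x)
    (B' := fun ω => Y0 ω = y ∧ W ω = w ∧ (U ω = u ∧ X ω = x)) (fun ω => by tauto)] at this
  exact this

lemma pr_empty {p : Ω → ℝ} {B : Ω → Prop} (hB : ∀ ω, ¬ B ω) : pr p B = 0 :=
  Finset.sum_eq_zero fun ω _ => if_neg (hB ω)

lemma NUM_empty {p : Ω → ℝ} {Y : Ω → ℝ} {B : Ω → Prop} (hB : ∀ ω, ¬ B ω) : NUM p Y B = 0 :=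
  Finset.sum_eq_zero fun ω _ => if_neg (hB ω)

/-- Sensitivity bound for the outcome-bridge identification formula under coarsening
of the unmeasured confounder (Supplement S3, outcome-bridge bound). -/
theorem outcome_bridge_sensitivity_bound
    {𝒳 𝒰 𝒰b 𝒵 𝒲 : Type*} [Fintype 𝒳] [Fintype 𝒰] [Fintype 𝒰b] [Fintype 𝒵] [Fintype 𝒲]
    (p : Ω → ℝ) (hp : ∀ ω, 0 ≤ p ω) (hp1 : ∑ ω, p ω = 1)
    (R : Ω → Bool) (X : Ω → 𝒳) (U : Ω → 𝒰) (Z : Ω → 𝒵) (W : Ω → 𝒲)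
    (φ : 𝒰 → 𝒰b)
    (Y0 : Ω → ℝ) (hY0 : ∀ ω, 0 ≤ Y0 ω)
    (h : 𝒲 → 𝒳 → ℝ) (hh0 : ∀ w x, 0 ≤ h w x)
    (Γ : ℝ) (hΓ : 1 ≤ Γ)
    -- (i) negative control assumption: (Y₀, W) ⫫ (Z, R) | (U, X)
    (hNC : ∀ (y : ℝ) (w : 𝒲) (z : 𝒵) (r : Bool) (u : 𝒰) (x : 𝒳),
      0 < pr p (fun ω => U ω = u ∧ X ω = x) →
      cpr p (fun ω => (Y0 ω = y ∧ W ω = w) ∧ (Z ω = z ∧ R ω = r))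
          (fun ω => U ω = u ∧ X ω = x)
        = cpr p (fun ω => Y0 ω = y ∧ W ω = w) (fun ω => U ω = u ∧ X ω = x)
          * cpr p (fun ω => Z ω = z ∧ R ω = r) (fun ω => U ω = u ∧ X ω = x))
    -- (ii) support equality
    (hsupp : ∀ (u : 𝒰) (z : 𝒵) (x : 𝒳),
      0 < pr p (fun ω => U ω = u ∧ Z ω = z ∧ X ω = x ∧ R ω = false)
        ↔ 0 < pr p (fun ω => U ω = u ∧ Z ω = z ∧ X ω = x ∧ R ω = true))
    -- (iii) bounded density ratio
    (hr : ∀ (u : 𝒰) (z : 𝒵) (x : 𝒳),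
      0 < pr p (fun ω => U ω = u ∧ Z ω = z ∧ X ω = x ∧ R ω = false) →
      1 / Γ ≤ cpr p (fun ω => U ω = u)
            (fun ω => φ (U ω) = φ u ∧ Z ω = z ∧ X ω = x ∧ R ω = false)
          / cpr p (fun ω => U ω = u)
            (fun ω => φ (U ω) = φ u ∧ Z ω = z ∧ X ω = x ∧ R ω = true)
        ∧ cpr p (fun ω => U ω = u)
            (fun ω => φ (U ω) = φ u ∧ Z ω = z ∧ X ω = x ∧ R ω = false)
          / cpr p (fun ω => U ω = u)
            (fun ω => φ (U ω) = φ u ∧ Z ω = z ∧ X ω = x ∧ R ω = true) ≤ Γ)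
    -- (iv) coarsened-level outcome bridge equation
    (hBridge : ∀ (ub : 𝒰b) (z : 𝒵) (x : 𝒳),
      0 < pr p (fun ω => φ (U ω) = ub ∧ Z ω = z ∧ X ω = x ∧ R ω = true) →
      cex p Y0 (fun ω => φ (U ω) = ub ∧ Z ω = z ∧ X ω = x ∧ R ω = true)
        = cex p (fun ω => h (W ω) (X ω))
            (fun ω => φ (U ω) = ub ∧ Z ω = z ∧ X ω = x ∧ R ω = true))
    -- (v)
    (hR0 : 0 < pr p (fun ω => R ω = false)) :
    (1 / Γ ^ 2) * cex p (fun ω => h (W ω) (X ω)) (fun ω => R ω = false)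
        ≤ cex p Y0 (fun ω => R ω = false)
      ∧ cex p Y0 (fun ω => R ω = false)
        ≤ Γ ^ 2 * cex p (fun ω => h (W ω) (X ω)) (fun ω => R ω = false) := by
  have hΓ0 : (0:ℝ) < Γ := lt_of_lt_of_le one_pos hΓ
  have hH0 : ∀ ω, 0 ≤ h (W ω) (X ω) := fun ω => hh0 _ _
  -- weight inequalities at the fine level
  have wineq : ∀ (u : 𝒰) (z : 𝒵) (x : 𝒳) (ub : 𝒰b), φ u = ub →
      pr p (fun ω => U ω = u ∧ Z ω = z ∧ X ω = x ∧ R ω = false)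
        * pr p (fun ω => φ (U ω) = ub ∧ Z ω = z ∧ X ω = x ∧ R ω = true)
      ≤ Γ * (pr p (fun ω => U ω = u ∧ Z ω = z ∧ X ω = x ∧ R ω = true)
        * pr p (fun ω => φ (U ω) = ub ∧ Z ω = z ∧ X ω = x ∧ R ω = false))
    ∧ pr p (fun ω => U ω = u ∧ Z ω = z ∧ X ω = x ∧ R ω = true)
        * pr p (fun ω => φ (U ω) = ub ∧ Z ω = z ∧ X ω = x ∧ R ω = false)
      ≤ Γ * (pr p (fun ω => U ω = u ∧ Z ω = z ∧ X ω = x ∧ R ω = false)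
        * pr p (fun ω => φ (U ω) = ub ∧ Z ω = z ∧ X ω = x ∧ R ω = true)) := by
    intro u z x ub hub
    by_cases hw0 : 0 < pr p (fun ω => U ω = u ∧ Z ω = z ∧ X ω = x ∧ R ω = false)
    · have hw1 : 0 < pr p (fun ω => U ω = u ∧ Z ω = z ∧ X ω = x ∧ R ω = true) :=
        (hsupp u z x).mp hw0
      have hsub0 : ∀ ω, (U ω = u ∧ Z ω = z ∧ X ω = x ∧ R ω = false) →
          (φ (U ω) = ub ∧ Z ω = z ∧ X ω = x ∧ R ω = false) := by
        rintro ω ⟨h1, h2, h3, h4⟩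
        exact ⟨by rw [h1, hub], h2, h3, h4⟩
      have hsub1 : ∀ ω, (U ω = u ∧ Z ω = z ∧ X ω = x ∧ R ω = true) →
          (φ (U ω) = ub ∧ Z ω = z ∧ X ω = x ∧ R ω = true) := by
        rintro ω ⟨h1, h2, h3, h4⟩
        exact ⟨by rw [h1, hub], h2, h3, h4⟩
      have hP0 : 0 < pr p (fun ω => φ (U ω) = ub ∧ Z ω = z ∧ X ω = x ∧ R ω = false) :=
        lt_of_lt_of_le hw0 (pr_mono hp hsub0)
      have hP1 : 0 < pr p (fun ω => φ (U ω) = ub ∧ Z ω = z ∧ X ω = x ∧ R ω = true) :=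
        lt_of_lt_of_le hw1 (pr_mono hp hsub1)
      have hr' := hr u z x hw0
      rw [hub] at hr'
      have e0 : cpr p (fun ω => U ω = u)
          (fun ω => φ (U ω) = ub ∧ Z ω = z ∧ X ω = x ∧ R ω = false)
          = pr p (fun ω => U ω = u ∧ Z ω = z ∧ X ω = x ∧ R ω = false)
            / pr p (fun ω => φ (U ω) = ub ∧ Z ω = z ∧ X ω = x ∧ R ω = false) := by
        unfold cpr
        congr 1
        refine pr_congr fun ω => ?_
        constructor
        · rintro ⟨h1, _, h3, h4, h5⟩; exact ⟨h1, h3, h4, h5⟩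
        · rintro ⟨h1, h3, h4, h5⟩; exact ⟨h1, by rw [h1, hub], h3, h4, h5⟩
      have e1 : cpr p (fun ω => U ω = u)
          (fun ω => φ (U ω) = ub ∧ Z ω = z ∧ X ω = x ∧ R ω = true)
          = pr p (fun ω => U ω = u ∧ Z ω = z ∧ X ω = x ∧ R ω = true)
            / pr p (fun ω => φ (U ω) = ub ∧ Z ω = z ∧ X ω = x ∧ R ω = true) := by
        unfold cpr
        congr 1
        refine pr_congr fun ω => ?_
        constructor
        · rintro ⟨h1, _, h3, h4, h5⟩; exact ⟨h1, h3, h4, h5⟩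
        · rintro ⟨h1, h3, h4, h5⟩; exact ⟨h1, by rw [h1, hub], h3, h4, h5⟩
      rw [e0, e1] at hr'
      obtain ⟨hlo, hhi⟩ := hr'
      have hq1 : 0 < pr p (fun ω => U ω = u ∧ Z ω = z ∧ X ω = x ∧ R ω = true)
          / pr p (fun ω => φ (U ω) = ub ∧ Z ω = z ∧ X ω = x ∧ R ω = true) :=
        div_pos hw1 hP1
      constructor
      · have hA : pr p (fun ω => U ω = u ∧ Z ω = z ∧ X ω = x ∧ R ω = false)
            / pr p (fun ω => φ (U ω) = ub ∧ Z ω = z ∧ X ω = x ∧ R ω = false)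
            ≤ Γ * (pr p (fun ω => U ω = u ∧ Z ω = z ∧ X ω = x ∧ R ω = true)
            / pr p (fun ω => φ (U ω) = ub ∧ Z ω = z ∧ X ω = x ∧ R ω = true)) := by
          rw [div_le_iff₀ hq1] at hhi
          exact hhi
        have := mul_le_mul_of_nonneg_right hA (mul_pos hP0 hP1).le
        calc pr p (fun ω => U ω = u ∧ Z ω = z ∧ X ω = x ∧ R ω = false)
              * pr p (fun ω => φ (U ω) = ub ∧ Z ω = z ∧ X ω = x ∧ R ω = true)
            = pr p (fun ω => U ω = u ∧ Z ω = z ∧ X ω = x ∧ R ω = false)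
              / pr p (fun ω => φ (U ω) = ub ∧ Z ω = z ∧ X ω = x ∧ R ω = false)
              * (pr p (fun ω => φ (U ω) = ub ∧ Z ω = z ∧ X ω = x ∧ R ω = false)
                * pr p (fun ω => φ (U ω) = ub ∧ Z ω = z ∧ X ω = x ∧ R ω = true)) := by
              field_simp
          _ ≤ Γ * (pr p (fun ω => U ω = u ∧ Z ω = z ∧ X ω = x ∧ R ω = true)
              / pr p (fun ω => φ (U ω) = ub ∧ Z ω = z ∧ X ω = x ∧ R ω = true))
              * (pr p (fun ω => φ (U ω) = ub ∧ Z ω = z ∧ X ω = x ∧ R ω = false)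
                * pr p (fun ω => φ (U ω) = ub ∧ Z ω = z ∧ X ω = x ∧ R ω = true)) := this
          _ = Γ * (pr p (fun ω => U ω = u ∧ Z ω = z ∧ X ω = x ∧ R ω = true)
              * pr p (fun ω => φ (U ω) = ub ∧ Z ω = z ∧ X ω = x ∧ R ω = false)) := by
              field_simp
      · have hB : pr p (fun ω => U ω = u ∧ Z ω = z ∧ X ω = x ∧ R ω = true)
            / pr p (fun ω => φ (U ω) = ub ∧ Z ω = z ∧ X ω = x ∧ R ω = true)
            ≤ Γ * (pr p (fun ω => U ω = u ∧ Z ω = z ∧ X ω = x ∧ R ω = false)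
            / pr p (fun ω => φ (U ω) = ub ∧ Z ω = z ∧ X ω = x ∧ R ω = false)) := by
          rw [le_div_iff₀ hq1] at hlo
          calc pr p (fun ω => U ω = u ∧ Z ω = z ∧ X ω = x ∧ R ω = true)
              / pr p (fun ω => φ (U ω) = ub ∧ Z ω = z ∧ X ω = x ∧ R ω = true)
              = Γ * (1 / Γ * (pr p (fun ω => U ω = u ∧ Z ω = z ∧ X ω = x ∧ R ω = true)
                / pr p (fun ω => φ (U ω) = ub ∧ Z ω = z ∧ X ω = x ∧ R ω = true))) := by
                field_simp
            _ ≤ Γ * (pr p (fun ω => U ω = u ∧ Z ω = z ∧ X ω = x ∧ R ω = false)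
                / pr p (fun ω => φ (U ω) = ub ∧ Z ω = z ∧ X ω = x ∧ R ω = false)) :=
                mul_le_mul_of_nonneg_left hlo hΓ0.le
        have := mul_le_mul_of_nonneg_right hB (mul_pos hP0 hP1).le
        calc pr p (fun ω => U ω = u ∧ Z ω = z ∧ X ω = x ∧ R ω = true)
              * pr p (fun ω => φ (U ω) = ub ∧ Z ω = z ∧ X ω = x ∧ R ω = false)
            = pr p (fun ω => U ω = u ∧ Z ω = z ∧ X ω = x ∧ R ω = true)
              / pr p (fun ω => φ (U ω) = ub ∧ Z ω = z ∧ X ω = x ∧ R ω = true)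
              * (pr p (fun ω => φ (U ω) = ub ∧ Z ω = z ∧ X ω = x ∧ R ω = false)
                * pr p (fun ω => φ (U ω) = ub ∧ Z ω = z ∧ X ω = x ∧ R ω = true)) := by
              field_simp
          _ ≤ Γ * (pr p (fun ω => U ω = u ∧ Z ω = z ∧ X ω = x ∧ R ω = false)
              / pr p (fun ω => φ (U ω) = ub ∧ Z ω = z ∧ X ω = x ∧ R ω = false))
              * (pr p (fun ω => φ (U ω) = ub ∧ Z ω = z ∧ X ω = x ∧ R ω = false)
                * pr p (fun ω => φ (U ω) = ub ∧ Z ω = z ∧ X ω = x ∧ R ω = true)) := this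
          _ = Γ * (pr p (fun ω => U ω = u ∧ Z ω = z ∧ X ω = x ∧ R ω = false)
              * pr p (fun ω => φ (U ω) = ub ∧ Z ω = z ∧ X ω = x ∧ R ω = true)) := by
              field_simp
    · have hw0e : pr p (fun ω => U ω = u ∧ Z ω = z ∧ X ω = x ∧ R ω = false) = 0 :=
        le_antisymm (not_lt.mp hw0) (pr_nonneg hp _)
      have hw1e : pr p (fun ω => U ω = u ∧ Z ω = z ∧ X ω = x ∧ R ω = true) = 0 :=
        le_antisymm (not_lt.mp (fun hpos => hw0 ((hsupp u z x).mpr hpos))) (pr_nonneg hp _)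
      rw [hw0e, hw1e]
      simp
  -- fine-level cell identities
  have cellY : ∀ (u : 𝒰) (z : 𝒵) (x : 𝒳) (r : Bool),
      NUM p Y0 (fun ω => U ω = u ∧ Z ω = z ∧ X ω = x ∧ R ω = r)
        * pr p (fun ω => U ω = u ∧ X ω = x)
      = NUM p Y0 (fun ω => U ω = u ∧ X ω = x)
        * pr p (fun ω => U ω = u ∧ Z ω = z ∧ X ω = x ∧ R ω = r) := by
    intro u z x r
    by_cases hA : 0 < pr p (fun ω => U ω = u ∧ Z ω = z ∧ X ω = x ∧ R ω = r)
    · have hUX : 0 < pr p (fun ω => U ω = u ∧ X ω = x) :=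
        lt_of_lt_of_le hA (pr_mono hp (fun ω hA' => ⟨hA'.1, hA'.2.2.1⟩))
      exact nc_cell p R X U Z W Y0 (fun y _ => y) u z x r hUX (fun y w => hNC y w z r u x hUX)
    · have hA0 : pr p (fun ω => U ω = u ∧ Z ω = z ∧ X ω = x ∧ R ω = r) = 0 :=
        le_antisymm (not_lt.mp hA) (pr_nonneg hp _)
      rw [NUM_zero hp hA0, hA0, zero_mul, mul_zero]
  have cellH : ∀ (u : 𝒰) (z : 𝒵) (x : 𝒳) (r : Bool),
      NUM p (fun ω => h (W ω) (X ω)) (fun ω => U ω = u ∧ Z ω = z ∧ X ω = x ∧ R ω = r)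
        * pr p (fun ω => U ω = u ∧ X ω = x)
      = NUM p (fun ω => h (W ω) (X ω)) (fun ω => U ω = u ∧ X ω = x)
        * pr p (fun ω => U ω = u ∧ Z ω = z ∧ X ω = x ∧ R ω = r) := by
    intro u z x r
    by_cases hA : 0 < pr p (fun ω => U ω = u ∧ Z ω = z ∧ X ω = x ∧ R ω = r)
    · have hUX : 0 < pr p (fun ω => U ω = u ∧ X ω = x) :=
        lt_of_lt_of_le hA (pr_mono hp (fun ω hA' => ⟨hA'.1, hA'.2.2.1⟩))
      have e1 : NUM p (fun ω => h (W ω) (X ω)) (fun ω => U ω = u ∧ Z ω = z ∧ X ω = x ∧ R ω = r)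
          = NUM p (fun ω => h (W ω) x) (fun ω => U ω = u ∧ Z ω = z ∧ X ω = x ∧ R ω = r) :=
        NUM_congr (fun ω => Iff.rfl) (fun ω hA' => by rw [hA'.2.2.1])
      have e2 : NUM p (fun ω => h (W ω) (X ω)) (fun ω => U ω = u ∧ X ω = x)
          = NUM p (fun ω => h (W ω) x) (fun ω => U ω = u ∧ X ω = x) :=
        NUM_congr (fun ω => Iff.rfl) (fun ω hA' => by rw [hA'.2])
      rw [e1, e2]
      exact nc_cell p R X U Z W Y0 (fun _ w => h w x) u z x r hUX
        (fun y w => hNC y w z r u x hUX)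
    · have hA0 : pr p (fun ω => U ω = u ∧ Z ω = z ∧ X ω = x ∧ R ω = r) = 0 :=
        le_antisymm (not_lt.mp hA) (pr_nonneg hp _)
      rw [NUM_zero hp hA0, hA0, zero_mul, mul_zero]
  -- fine-level directional inequalities
  have Afact : ∀ (Y : Ω → ℝ), (∀ ω, 0 ≤ Y ω) →
      (∀ (u : 𝒰) (z : 𝒵) (x : 𝒳) (r : Bool),
        NUM p Y (fun ω => U ω = u ∧ Z ω = z ∧ X ω = x ∧ R ω = r)
          * pr p (fun ω => U ω = u ∧ X ω = x)
        = NUM p Y (fun ω => U ω = u ∧ X ω = x)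
          * pr p (fun ω => U ω = u ∧ Z ω = z ∧ X ω = x ∧ R ω = r)) →
      ∀ (u : 𝒰) (z : 𝒵) (x : 𝒳) (ub : 𝒰b), φ u = ub →
        NUM p Y (fun ω => U ω = u ∧ Z ω = z ∧ X ω = x ∧ R ω = false)
            * pr p (fun ω => φ (U ω) = ub ∧ Z ω = z ∧ X ω = x ∧ R ω = true)
          ≤ Γ * (NUM p Y (fun ω => U ω = u ∧ Z ω = z ∧ X ω = x ∧ R ω = true)
            * pr p (fun ω => φ (U ω) = ub ∧ Z ω = z ∧ X ω = x ∧ R ω = false))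
        ∧ NUM p Y (fun ω => U ω = u ∧ Z ω = z ∧ X ω = x ∧ R ω = true)
            * pr p (fun ω => φ (U ω) = ub ∧ Z ω = z ∧ X ω = x ∧ R ω = false)
          ≤ Γ * (NUM p Y (fun ω => U ω = u ∧ Z ω = z ∧ X ω = x ∧ R ω = false)
            * pr p (fun ω => φ (U ω) = ub ∧ Z ω = z ∧ X ω = x ∧ R ω = true)) := by
    intro Y hY hcell u z x ub hub
    obtain ⟨hw1, hw2⟩ := wineq u z x ub hub
    by_cases hUX : 0 < pr p (fun ω => U ω = u ∧ X ω = x)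
    · have hN : 0 ≤ NUM p Y (fun ω => U ω = u ∧ X ω = x) := NUM_nonneg hp hY _
      constructor
      · refine le_of_mul_le_mul_right ?_ hUX
        calc NUM p Y (fun ω => U ω = u ∧ Z ω = z ∧ X ω = x ∧ R ω = false)
              * pr p (fun ω => φ (U ω) = ub ∧ Z ω = z ∧ X ω = x ∧ R ω = true)
              * pr p (fun ω => U ω = u ∧ X ω = x)
            = NUM p Y (fun ω => U ω = u ∧ Z ω = z ∧ X ω = x ∧ R ω = false)
              * pr p (fun ω => U ω = u ∧ X ω = x)
              * pr p (fun ω => φ (U ω) = ub ∧ Z ω = z ∧ X ω = x ∧ R ω = true) := by ring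
          _ = NUM p Y (fun ω => U ω = u ∧ X ω = x)
              * pr p (fun ω => U ω = u ∧ Z ω = z ∧ X ω = x ∧ R ω = false)
              * pr p (fun ω => φ (U ω) = ub ∧ Z ω = z ∧ X ω = x ∧ R ω = true) := by
              rw [hcell u z x false]
          _ = NUM p Y (fun ω => U ω = u ∧ X ω = x)
              * (pr p (fun ω => U ω = u ∧ Z ω = z ∧ X ω = x ∧ R ω = false)
              * pr p (fun ω => φ (U ω) = ub ∧ Z ω = z ∧ X ω = x ∧ R ω = true)) := by ring
          _ ≤ NUM p Y (fun ω => U ω = u ∧ X ω = x)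
              * (Γ * (pr p (fun ω => U ω = u ∧ Z ω = z ∧ X ω = x ∧ R ω = true)
              * pr p (fun ω => φ (U ω) = ub ∧ Z ω = z ∧ X ω = x ∧ R ω = false))) :=
              mul_le_mul_of_nonneg_left hw1 hN
          _ = NUM p Y (fun ω => U ω = u ∧ X ω = x)
              * pr p (fun ω => U ω = u ∧ Z ω = z ∧ X ω = x ∧ R ω = true)
              * (Γ * pr p (fun ω => φ (U ω) = ub ∧ Z ω = z ∧ X ω = x ∧ R ω = false)) := by
              ring
          _ = NUM p Y (fun ω => U ω = u ∧ Z ω = z ∧ X ω = x ∧ R ω = true)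
              * pr p (fun ω => U ω = u ∧ X ω = x)
              * (Γ * pr p (fun ω => φ (U ω) = ub ∧ Z ω = z ∧ X ω = x ∧ R ω = false)) := by
              rw [hcell u z x true]
          _ = Γ * (NUM p Y (fun ω => U ω = u ∧ Z ω = z ∧ X ω = x ∧ R ω = true)
              * pr p (fun ω => φ (U ω) = ub ∧ Z ω = z ∧ X ω = x ∧ R ω = false))
              * pr p (fun ω => U ω = u ∧ X ω = x) := by ring
      · refine le_of_mul_le_mul_right ?_ hUX
        calc NUM p Y (fun ω => U ω = u ∧ Z ω = z ∧ X ω = x ∧ R ω = true)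
              * pr p (fun ω => φ (U ω) = ub ∧ Z ω = z ∧ X ω = x ∧ R ω = false)
              * pr p (fun ω => U ω = u ∧ X ω = x)
            = NUM p Y (fun ω => U ω = u ∧ Z ω = z ∧ X ω = x ∧ R ω = true)
              * pr p (fun ω => U ω = u ∧ X ω = x)
              * pr p (fun ω => φ (U ω) = ub ∧ Z ω = z ∧ X ω = x ∧ R ω = false) := by ring
          _ = NUM p Y (fun ω => U ω = u ∧ X ω = x)
              * pr p (fun ω => U ω = u ∧ Z ω = z ∧ X ω = x ∧ R ω = true)
              * pr p (fun ω => φ (U ω) = ub ∧ Z ω = z ∧ X ω = x ∧ R ω = false) := by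
              rw [hcell u z x true]
          _ = NUM p Y (fun ω => U ω = u ∧ X ω = x)
              * (pr p (fun ω => U ω = u ∧ Z ω = z ∧ X ω = x ∧ R ω = true)
              * pr p (fun ω => φ (U ω) = ub ∧ Z ω = z ∧ X ω = x ∧ R ω = false)) := by ring
          _ ≤ NUM p Y (fun ω => U ω = u ∧ X ω = x)
              * (Γ * (pr p (fun ω => U ω = u ∧ Z ω = z ∧ X ω = x ∧ R ω = false)
              * pr p (fun ω => φ (U ω) = ub ∧ Z ω = z ∧ X ω = x ∧ R ω = true))) :=
              mul_le_mul_of_nonneg_left hw2 hN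
          _ = NUM p Y (fun ω => U ω = u ∧ X ω = x)
              * pr p (fun ω => U ω = u ∧ Z ω = z ∧ X ω = x ∧ R ω = false)
              * (Γ * pr p (fun ω => φ (U ω) = ub ∧ Z ω = z ∧ X ω = x ∧ R ω = true)) := by
              ring
          _ = NUM p Y (fun ω => U ω = u ∧ Z ω = z ∧ X ω = x ∧ R ω = false)
              * pr p (fun ω => U ω = u ∧ X ω = x)
              * (Γ * pr p (fun ω => φ (U ω) = ub ∧ Z ω = z ∧ X ω = x ∧ R ω = true)) := by
              rw [hcell u z x false]
          _ = Γ * (NUM p Y (fun ω => U ω = u ∧ Z ω = z ∧ X ω = x ∧ R ω = false)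
              * pr p (fun ω => φ (U ω) = ub ∧ Z ω = z ∧ X ω = x ∧ R ω = true))
              * pr p (fun ω => U ω = u ∧ X ω = x) := by ring
    · have hUX0 : pr p (fun ω => U ω = u ∧ X ω = x) = 0 :=
        le_antisymm (not_lt.mp hUX) (pr_nonneg hp _)
      have hf0 : pr p (fun ω => U ω = u ∧ Z ω = z ∧ X ω = x ∧ R ω = false) = 0 :=
        le_antisymm (hUX0 ▸ pr_mono hp (fun ω hA' => ⟨hA'.1, hA'.2.2.1⟩)) (pr_nonneg hp _)
      have ht0 : pr p (fun ω => U ω = u ∧ Z ω = z ∧ X ω = x ∧ R ω = true) = 0 :=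
        le_antisymm (hUX0 ▸ pr_mono hp (fun ω hA' => ⟨hA'.1, hA'.2.2.1⟩)) (pr_nonneg hp _)
      constructor <;> simp [NUM_zero hp hf0, NUM_zero hp ht0]
  -- coarsened-level directional inequalities
  have Bfact : ∀ (Y : Ω → ℝ), (∀ ω, 0 ≤ Y ω) →
      (∀ (u : 𝒰) (z : 𝒵) (x : 𝒳) (r : Bool),
        NUM p Y (fun ω => U ω = u ∧ Z ω = z ∧ X ω = x ∧ R ω = r)
          * pr p (fun ω => U ω = u ∧ X ω = x)
        = NUM p Y (fun ω => U ω = u ∧ X ω = x)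
          * pr p (fun ω => U ω = u ∧ Z ω = z ∧ X ω = x ∧ R ω = r)) →
      ∀ (ub : 𝒰b) (z : 𝒵) (x : 𝒳),
        NUM p Y (fun ω => φ (U ω) = ub ∧ Z ω = z ∧ X ω = x ∧ R ω = false)
            * pr p (fun ω => φ (U ω) = ub ∧ Z ω = z ∧ X ω = x ∧ R ω = true)
          ≤ Γ * (NUM p Y (fun ω => φ (U ω) = ub ∧ Z ω = z ∧ X ω = x ∧ R ω = true)
            * pr p (fun ω => φ (U ω) = ub ∧ Z ω = z ∧ X ω = x ∧ R ω = false))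
        ∧ NUM p Y (fun ω => φ (U ω) = ub ∧ Z ω = z ∧ X ω = x ∧ R ω = true)
            * pr p (fun ω => φ (U ω) = ub ∧ Z ω = z ∧ X ω = x ∧ R ω = false)
          ≤ Γ * (NUM p Y (fun ω => φ (U ω) = ub ∧ Z ω = z ∧ X ω = x ∧ R ω = false)
            * pr p (fun ω => φ (U ω) = ub ∧ Z ω = z ∧ X ω = x ∧ R ω = true)) := by
    intro Y hY hcell ub z x
    have term : ∀ (r : Bool) (u : 𝒰),
        NUM p Y (fun ω => U ω = u ∧ (φ (U ω) = ub ∧ Z ω = z ∧ X ω = x ∧ R ω = r))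
          = if φ u = ub then NUM p Y (fun ω => U ω = u ∧ Z ω = z ∧ X ω = x ∧ R ω = r)
            else 0 := by
      intro r u
      by_cases hub : φ u = ub
      · rw [if_pos hub]
        refine NUM_congr (fun ω => ?_) (fun _ _ => rfl)
        constructor
        · rintro ⟨h1, _, h3, h4, h5⟩; exact ⟨h1, h3, h4, h5⟩
        · rintro ⟨h1, h3, h4, h5⟩; exact ⟨h1, by rw [h1, hub], h3, h4, h5⟩
      · rw [if_neg hub]
        refine NUM_empty fun ω => ?_
        rintro ⟨h1, h2, -⟩
        exact hub (by rw [← h1]; exact h2)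
    have split0 := NUM_split p Y U (fun ω => φ (U ω) = ub ∧ Z ω = z ∧ X ω = x ∧ R ω = false)
    have split1 := NUM_split p Y U (fun ω => φ (U ω) = ub ∧ Z ω = z ∧ X ω = x ∧ R ω = true)
    constructor
    · rw [split0, split1, Finset.sum_mul, Finset.sum_mul, Finset.mul_sum]
      refine Finset.sum_le_sum fun u _ => ?_
      rw [term false u, term true u]
      by_cases hub : φ u = ub
      · rw [if_pos hub, if_pos hub]
        exact (Afact Y hY hcell u z x ub hub).1
      · rw [if_neg hub, if_neg hub]
        simp
    · rw [split0, split1, Finset.sum_mul, Finset.sum_mul, Finset.mul_sum]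
      refine Finset.sum_le_sum fun u _ => ?_
      rw [term false u, term true u]
      by_cases hub : φ u = ub
      · rw [if_pos hub, if_pos hub]
        exact (Afact Y hY hcell u z x ub hub).2
      · rw [if_neg hub, if_neg hub]
        simp
  -- bridge equation in unnormalized form
  have bridgeEq : ∀ (ub : 𝒰b) (z : 𝒵) (x : 𝒳),
      NUM p Y0 (fun ω => φ (U ω) = ub ∧ Z ω = z ∧ X ω = x ∧ R ω = true)
        = NUM p (fun ω => h (W ω) (X ω))
            (fun ω => φ (U ω) = ub ∧ Z ω = z ∧ X ω = x ∧ R ω = true) := by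
    intro ub z x
    by_cases hB1 : 0 < pr p (fun ω => φ (U ω) = ub ∧ Z ω = z ∧ X ω = x ∧ R ω = true)
    · have hb := hBridge ub z x hB1
      rw [cex_eq, cex_eq] at hb
      have := congrArg (· * pr p (fun ω => φ (U ω) = ub ∧ Z ω = z ∧ X ω = x ∧ R ω = true)) hb
      simpa [div_mul_cancel₀, ne_of_gt hB1] using this
    · have e : pr p (fun ω => φ (U ω) = ub ∧ Z ω = z ∧ X ω = x ∧ R ω = true) = 0 :=
        le_antisymm (not_lt.mp hB1) (pr_nonneg hp _)
      rw [NUM_zero hp e, NUM_zero hp e]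
  -- degenerate-cell implication
  have hB0of1 : ∀ (ub : 𝒰b) (z : 𝒵) (x : 𝒳),
      pr p (fun ω => φ (U ω) = ub ∧ Z ω = z ∧ X ω = x ∧ R ω = true) = 0 →
      pr p (fun ω => φ (U ω) = ub ∧ Z ω = z ∧ X ω = x ∧ R ω = false) = 0 := by
    intro ub z x h1
    rw [pr_split p U (fun ω => φ (U ω) = ub ∧ Z ω = z ∧ X ω = x ∧ R ω = false)]
    refine Finset.sum_eq_zero fun u _ => ?_
    by_cases hub : φ u = ub
    · have ec : pr p (fun ω => U ω = u ∧ (φ (U ω) = ub ∧ Z ω = z ∧ X ω = x ∧ R ω = false))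
          = pr p (fun ω => U ω = u ∧ Z ω = z ∧ X ω = x ∧ R ω = false) := by
        refine pr_congr fun ω => ?_
        constructor
        · rintro ⟨h1', _, h3, h4, h5⟩; exact ⟨h1', h3, h4, h5⟩
        · rintro ⟨h1', h3, h4, h5⟩; exact ⟨h1', by rw [h1', hub], h3, h4, h5⟩
      rw [ec]
      by_contra hne
      have hpos : 0 < pr p (fun ω => U ω = u ∧ Z ω = z ∧ X ω = x ∧ R ω = false) :=
        lt_of_le_of_ne (pr_nonneg hp _) (Ne.symm hne)
      have h1' : 0 < pr p (fun ω => U ω = u ∧ Z ω = z ∧ X ω = x ∧ R ω = true) :=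
        (hsupp u z x).mp hpos
      have hgt : 0 < pr p (fun ω => φ (U ω) = ub ∧ Z ω = z ∧ X ω = x ∧ R ω = true) :=
        lt_of_lt_of_le h1' (pr_mono hp (by
          rintro ω ⟨ha, hb, hc, hd⟩
          exact ⟨by rw [ha, hub], hb, hc, hd⟩))
      exact hgt.ne' h1
    · refine pr_empty fun ω => ?_
      rintro ⟨h1', h2', -⟩
      exact hub (by rw [← h1']; exact h2')
  -- per-cell bounds
  have cellUpper : ∀ (ub : 𝒰b) (z : 𝒵) (x : 𝒳),
      NUM p Y0 (fun ω => φ (U ω) = ub ∧ Z ω = z ∧ X ω = x ∧ R ω = false)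
        ≤ Γ ^ 2 * NUM p (fun ω => h (W ω) (X ω))
            (fun ω => φ (U ω) = ub ∧ Z ω = z ∧ X ω = x ∧ R ω = false) := by
    intro ub z x
    by_cases hB1 : 0 < pr p (fun ω => φ (U ω) = ub ∧ Z ω = z ∧ X ω = x ∧ R ω = true)
    · have d1 := (Bfact Y0 hY0 cellY ub z x).1
      have d2 := (Bfact (fun ω => h (W ω) (X ω)) hH0 cellH ub z x).2
      have be := bridgeEq ub z x
      refine le_of_mul_le_mul_right ?_ hB1
      calc NUM p Y0 (fun ω => φ (U ω) = ub ∧ Z ω = z ∧ X ω = x ∧ R ω = false)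
            * pr p (fun ω => φ (U ω) = ub ∧ Z ω = z ∧ X ω = x ∧ R ω = true)
          ≤ Γ * (NUM p Y0 (fun ω => φ (U ω) = ub ∧ Z ω = z ∧ X ω = x ∧ R ω = true)
            * pr p (fun ω => φ (U ω) = ub ∧ Z ω = z ∧ X ω = x ∧ R ω = false)) := d1
        _ = Γ * (NUM p (fun ω => h (W ω) (X ω))
            (fun ω => φ (U ω) = ub ∧ Z ω = z ∧ X ω = x ∧ R ω = true)
            * pr p (fun ω => φ (U ω) = ub ∧ Z ω = z ∧ X ω = x ∧ R ω = false)) := by rw [be]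
        _ ≤ Γ * (Γ * (NUM p (fun ω => h (W ω) (X ω))
            (fun ω => φ (U ω) = ub ∧ Z ω = z ∧ X ω = x ∧ R ω = false)
            * pr p (fun ω => φ (U ω) = ub ∧ Z ω = z ∧ X ω = x ∧ R ω = true))) :=
            mul_le_mul_of_nonneg_left d2 hΓ0.le
        _ = Γ ^ 2 * NUM p (fun ω => h (W ω) (X ω))
            (fun ω => φ (U ω) = ub ∧ Z ω = z ∧ X ω = x ∧ R ω = false)
            * pr p (fun ω => φ (U ω) = ub ∧ Z ω = z ∧ X ω = x ∧ R ω = true) := by ring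
    · have e1 : pr p (fun ω => φ (U ω) = ub ∧ Z ω = z ∧ X ω = x ∧ R ω = true) = 0 :=
        le_antisymm (not_lt.mp hB1) (pr_nonneg hp _)
      have e0 := hB0of1 ub z x e1
      rw [NUM_zero hp e0, NUM_zero hp e0]
      simp
  have cellLower : ∀ (ub : 𝒰b) (z : 𝒵) (x : 𝒳),
      NUM p (fun ω => h (W ω) (X ω))
          (fun ω => φ (U ω) = ub ∧ Z ω = z ∧ X ω = x ∧ R ω = false)
        ≤ Γ ^ 2 * NUM p Y0 (fun ω => φ (U ω) = ub ∧ Z ω = z ∧ X ω = x ∧ R ω = false) := by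
    intro ub z x
    by_cases hB1 : 0 < pr p (fun ω => φ (U ω) = ub ∧ Z ω = z ∧ X ω = x ∧ R ω = true)
    · have d1 := (Bfact (fun ω => h (W ω) (X ω)) hH0 cellH ub z x).1
      have d2 := (Bfact Y0 hY0 cellY ub z x).2
      have be := bridgeEq ub z x
      refine le_of_mul_le_mul_right ?_ hB1
      calc NUM p (fun ω => h (W ω) (X ω))
            (fun ω => φ (U ω) = ub ∧ Z ω = z ∧ X ω = x ∧ R ω = false)
            * pr p (fun ω => φ (U ω) = ub ∧ Z ω = z ∧ X ω = x ∧ R ω = true)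
          ≤ Γ * (NUM p (fun ω => h (W ω) (X ω))
            (fun ω => φ (U ω) = ub ∧ Z ω = z ∧ X ω = x ∧ R ω = true)
            * pr p (fun ω => φ (U ω) = ub ∧ Z ω = z ∧ X ω = x ∧ R ω = false)) := d1
        _ = Γ * (NUM p Y0 (fun ω => φ (U ω) = ub ∧ Z ω = z ∧ X ω = x ∧ R ω = true)
            * pr p (fun ω => φ (U ω) = ub ∧ Z ω = z ∧ X ω = x ∧ R ω = false)) := by rw [be]
        _ ≤ Γ * (Γ * (NUM p Y0 (fun ω => φ (U ω) = ub ∧ Z ω = z ∧ X ω = x ∧ R ω = false)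
            * pr p (fun ω => φ (U ω) = ub ∧ Z ω = z ∧ X ω = x ∧ R ω = true))) :=
            mul_le_mul_of_nonneg_left d2 hΓ0.le
        _ = Γ ^ 2 * NUM p Y0 (fun ω => φ (U ω) = ub ∧ Z ω = z ∧ X ω = x ∧ R ω = false)
            * pr p (fun ω => φ (U ω) = ub ∧ Z ω = z ∧ X ω = x ∧ R ω = true) := by ring
    · have e1 : pr p (fun ω => φ (U ω) = ub ∧ Z ω = z ∧ X ω = x ∧ R ω = true) = 0 :=
        le_antisymm (not_lt.mp hB1) (pr_nonneg hp _)
      have e0 := hB0of1 ub z x e1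
      rw [NUM_zero hp e0, NUM_zero hp e0]
      simp
  -- aggregation over coarsened cells
  have splitR : ∀ Y : Ω → ℝ, NUM p Y (fun ω => R ω = false)
      = ∑ i : 𝒰b × 𝒵 × 𝒳, NUM p Y
          (fun ω => φ (U ω) = i.1 ∧ Z ω = i.2.1 ∧ X ω = i.2.2 ∧ R ω = false) := by
    intro Y
    rw [NUM_split p Y (fun ω => (φ (U ω), Z ω, X ω)) (fun ω => R ω = false)]
    refine Finset.sum_congr rfl fun i _ => NUM_congr (fun ω => ?_) (fun _ _ => rfl)
    obtain ⟨ub, z, x⟩ := i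
    simp only [Prod.mk.injEq]
    tauto
  have aggU : NUM p Y0 (fun ω => R ω = false)
      ≤ Γ ^ 2 * NUM p (fun ω => h (W ω) (X ω)) (fun ω => R ω = false) := by
    rw [splitR Y0, splitR (fun ω => h (W ω) (X ω)), Finset.mul_sum]
    exact Finset.sum_le_sum fun i _ => cellUpper i.1 i.2.1 i.2.2
  have aggL : NUM p (fun ω => h (W ω) (X ω)) (fun ω => R ω = false)
      ≤ Γ ^ 2 * NUM p Y0 (fun ω => R ω = false) := by
    rw [splitR Y0, splitR (fun ω => h (W ω) (X ω)), Finset.mul_sum]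
    exact Finset.sum_le_sum fun i _ => cellLower i.1 i.2.1 i.2.2
  have hΓ2 : (0:ℝ) < Γ ^ 2 := by positivity
  constructor
  · rw [cex_eq, cex_eq]
    have hnum : (1 / Γ ^ 2) * NUM p (fun ω => h (W ω) (X ω)) (fun ω => R ω = false)
        ≤ NUM p Y0 (fun ω => R ω = false) := by
      rw [div_mul_eq_mul_div, one_mul, div_le_iff₀ hΓ2]
      linarith [aggL]
    calc (1 / Γ ^ 2) * (NUM p (fun ω => h (W ω) (X ω)) (fun ω => R ω = false)
          / pr p (fun ω => R ω = false))
        = ((1 / Γ ^ 2) * NUM p (fun ω => h (W ω) (X ω)) (fun ω => R ω = false))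
          / pr p (fun ω => R ω = false) := by ring
      _ ≤ NUM p Y0 (fun ω => R ω = false) / pr p (fun ω => R ω = false) := by
          exact div_le_div_of_nonneg_right hnum hR0.le |>.trans_eq rfl
  · rw [cex_eq, cex_eq]
    calc NUM p Y0 (fun ω => R ω = false) / pr p (fun ω => R ω = false)
        ≤ (Γ ^ 2 * NUM p (fun ω => h (W ω) (X ω)) (fun ω => R ω = false))
          / pr p (fun ω => R ω = false) := by
          exact div_le_div_of_nonneg_right aggU hR0.le |>.trans_eq rfl
      _ = Γ ^ 2 * (NUM p (fun ω => h (W ω) (X ω)) (fun ω => R ω = false)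
          / pr p (fun ω => R ω = false)) := by ring
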